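/- arXiv:2106.09950 — 7 statements merged into one kernel-verified Lean document; each statement's English description precedes it below -/
import Mathlib

section
/- Let ℓ be a prime and G a closed subgroup of GL_2(ℤ_ℓ). If the reduction of G modulo ℓ contains the scalar matrix λ·Id for some λ ∈ 𝔽_ℓ^×, then G contains λ̃·Id, where λ̃ is the Teichmüller lift of λ. -/
/-!
Write `g = λ̃ • 1 + ℓ • B`. If `X ≡ 1 (mod ℓ^j)` with `j ≥ 1`, then `X^ℓ ≡ 1 (mod ℓ^(j+1))`, because
`X^ℓ - 1 = (∑_{i<ℓ} X^i) (X - 1)` and the geometric sum is `≡ ℓ (mod ℓ^j)`. As `λ̃` is central and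
`λ̃^ℓ = λ̃`, this gives `g^(ℓ^k) = λ̃ • (1 + ℓ λ̃⁻¹ • B)^(ℓ^k) ≡ λ̃ • 1 (mod ℓ^(k+1))`, so
`g^(ℓ^k) → λ̃ • 1`. The same argument for `g⁻¹` and `λ̃⁻¹` makes the inverses converge as well, so
the convergence holds in `GL₂(ℤ_ℓ)`, and the limit lies in the closed subgroup `G`.
-/

open Filter Topology Matrix

section PowerCongruence

variable {R A : Type*} [CommRing R] [Ring A] [Algebra R A]

theorem exists_one_add_smul_pow_eq (c : R) (C : A) (n : ℕ) :
    ∃ D : A, (1 + c • C) ^ n = 1 + c • D := by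
  induction n with
  | zero => exact ⟨0, by simp⟩
  | succ n ih =>
    obtain ⟨D, hD⟩ := ih
    refine ⟨D + C + c • (D * C), ?_⟩
    rw [pow_succ, hD]
    simp only [mul_add, add_mul, one_mul, mul_one, smul_mul_smul_comm, smul_add, smul_smul]
    abel

theorem exists_one_add_pow_smul_pow_eq (p k : ℕ) (C : A) :
    ∃ D : A, (1 + (p : R) ^ (k + 1) • C) ^ p = 1 + (p : R) ^ (k + 2) • D := by
  set c : R := (p : R) ^ (k + 1)
  choose D hD using exists_one_add_smul_pow_eq c C
  have hgeom : ∑ j ∈ Finset.range p, (1 + c • C) ^ j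
      = (p : R) • 1 + c • ∑ j ∈ Finset.range p, D j := by
    simp only [hD, Finset.sum_add_distrib, Finset.sum_const, Finset.card_range, Finset.smul_sum,
      Nat.cast_smul_eq_nsmul]
  refine ⟨C + (p : R) ^ k • ((∑ j ∈ Finset.range p, D j) * C), ?_⟩
  rw [← sub_eq_iff_eq_add', ← geom_sum_mul, hgeom, add_sub_cancel_left]
  simp only [c, add_mul, smul_mul_smul_comm, one_mul, smul_add, smul_smul]
  ring_nf

theorem exists_one_add_smul_pow_pow_eq (p n : ℕ) (B : A) :
    ∃ D : A, (1 + (p : R) • B) ^ p ^ n = 1 + (p : R) ^ (n + 1) • D := by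
  induction n with
  | zero => exact ⟨B, by simp⟩
  | succ n ih =>
    obtain ⟨D, hD⟩ := ih
    obtain ⟨E, hE⟩ := exists_one_add_pow_smul_pow_eq (R := R) p n D
    exact ⟨E, by rw [pow_succ, pow_mul, hD, hE]⟩

theorem exists_algebraMap_add_smul_pow_pow_eq {p : ℕ} {u : Rˣ} (hu : (u : R) ^ p = u) (B : A)
    (n : ℕ) : ∃ D : A,
      (algebraMap R A u + (p : R) • B) ^ p ^ n = algebraMap R A u + (p : R) ^ (n + 1) • D := by
  have hun : (u : R) ^ p ^ n = u := by
    induction n with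
    | zero => simp
    | succ n ih => rw [pow_succ, pow_mul, ih, hu]
  obtain ⟨D, hD⟩ := exists_one_add_smul_pow_pow_eq (R := R) p n ((↑u⁻¹ : R) • B)
  have hfactor : algebraMap R A u + (p : R) • B
      = algebraMap R A u * (1 + (p : R) • (↑u⁻¹ : R) • B) := by
    rw [mul_add, mul_one, ← Algebra.smul_def, smul_comm, smul_smul, smul_smul, mul_assoc,
      Units.mul_inv, mul_one]
  refine ⟨(u : R) • D, ?_⟩
  rw [hfactor, (Algebra.commute_algebraMap_left _ _).mul_pow, ← map_pow, hun, hD, mul_add,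
    mul_one, ← Algebra.smul_def, smul_comm]

end PowerCongruence

theorem Matrix.exists_eq_add_smul_of_map_eq {m n R S : Type*} [CommRing R] [Ring S]
    {f : R →+* S} {c : R} (hf : RingHom.ker f = Ideal.span {c}) {M N : Matrix m n R}
    (h : M.map f = N.map f) : ∃ B : Matrix m n R, M = N + c • B := by
  have hdvd : ∀ i j, c ∣ M i j - N i j := fun i j => by
    rw [← Ideal.mem_span_singleton, ← hf, RingHom.mem_ker, map_sub, sub_eq_zero]
    exact congrFun (congrFun h i) j
  choose B hB using hdvd
  exact ⟨of B, by ext i j; simp [← hB]⟩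

namespace PadicInt

variable {p : ℕ} [Fact p.Prime]

theorem ker_toZMod_eq_span_p :
    RingHom.ker (toZMod : ℤ_[p] →+* ZMod p) = Ideal.span {(p : ℤ_[p])} :=
  ker_toZMod.trans maximalIdeal_eq_span_p

theorem tendsto_p_pow_mul (a : ℕ → ℤ_[p]) :
    Tendsto (fun k => (p : ℤ_[p]) ^ k * a k) atTop (𝓝 0) := by
  refine squeeze_zero_norm (fun k => ?_)
    (tendsto_pow_atTop_nhds_zero_of_lt_one (norm_nonneg (p : ℤ_[p])) ?_)
  · rw [norm_mul, norm_pow]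
    exact mul_le_of_le_one_right (by positivity) (a k).norm_le_one
  · rw [norm_p]
    exact inv_lt_one_of_one_lt₀ (by exact_mod_cast (Fact.out : p.Prime).one_lt)

theorem tendsto_p_pow_smul_matrix {m n : Type*} (D : ℕ → Matrix m n ℤ_[p]) :
    Tendsto (fun k => (p : ℤ_[p]) ^ k • D k) atTop (𝓝 0) :=
  tendsto_pi_nhds.2 fun i => tendsto_pi_nhds.2 fun j => tendsto_p_pow_mul fun k => D k i j

variable {n : Type*} [Fintype n] [DecidableEq n]

theorem tendsto_pow_pow_of_map_toZMod_eq_scalar {M : Matrix n n ℤ_[p]} {u : ℤ_[p]ˣ}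
    (hu : (u : ℤ_[p]) ^ p = u) (hM : M.map toZMod = (scalar n (u : ℤ_[p])).map toZMod) :
    Tendsto (fun k => M ^ p ^ k) atTop (𝓝 (scalar n (u : ℤ_[p]))) := by
  obtain ⟨B, rfl⟩ := exists_eq_add_smul_of_map_eq ker_toZMod_eq_span_p hM
  choose D hD using exists_algebraMap_add_smul_pow_pow_eq hu B
  change Tendsto (fun k => (algebraMap ℤ_[p] (Matrix n n ℤ_[p]) u + _) ^ _) _
    (𝓝 (algebraMap ℤ_[p] (Matrix n n ℤ_[p]) u))
  simp_rw [hD, pow_succ, mul_smul]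
  simpa only [add_zero] using
    tendsto_const_nhds.add (tendsto_p_pow_smul_matrix fun k => (p : ℤ_[p]) • D k)

theorem tendsto_GL_pow_pow_of_map_toZMod_eq_scalar {g : GL n ℤ_[p]} {u : ℤ_[p]ˣ}
    (hu : u ^ p = u) (hg : GeneralLinearGroup.map toZMod g
      = GeneralLinearGroup.map toZMod (GeneralLinearGroup.scalar n u)) :
    Tendsto (fun k => g ^ p ^ k) atTop (𝓝 (GeneralLinearGroup.scalar n u)) := by
  have hg_inv : GeneralLinearGroup.map toZMod g⁻¹
      = GeneralLinearGroup.map toZMod (GeneralLinearGroup.scalar n u⁻¹) := by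
    rw [map_inv, map_inv, map_inv, hg]
  rw [Units.isInducing_embedProduct.tendsto_nhds_iff]
  refine .prodMk_nhds ?_ ((MulOpposite.continuous_op.tendsto _).comp ?_)
  · simp only [Units.val_pow_eq_pow_val, GeneralLinearGroup.coe_scalar]
    exact tendsto_pow_pow_of_map_toZMod_eq_scalar (by rw [← Units.val_pow_eq_pow_val, hu])
      (congrArg Units.val hg)
  · simp only [← inv_pow, Units.val_pow_eq_pow_val]
    exact tendsto_pow_pow_of_map_toZMod_eq_scalar
      (by rw [← Units.val_pow_eq_pow_val, inv_pow, hu]) (congrArg Units.val hg_inv)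

end PadicInt

/-- If a closed subgroup G of GL_2(ℤ_ℓ) has mod-ℓ image containing the scalar
λ·Id, then G contains λ̃·Id, where λ̃ is the Teichmüller lift of λ. -/
theorem stmt4 (ℓ : ℕ) [Fact (Nat.Prime ℓ)] (G : Subgroup (GL (Fin 2) ℤ_[ℓ]))
    (hG : IsClosed (G : Set (GL (Fin 2) ℤ_[ℓ]))) (lam : (ZMod ℓ)ˣ)
    (hyp : ∃ g ∈ G, ((g : Matrix (Fin 2) (Fin 2) ℤ_[ℓ])).map (PadicInt.toZMod (p := ℓ))
      = (lam : ZMod ℓ) • (1 : Matrix (Fin 2) (Fin 2) (ZMod ℓ)))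
    (lamt : ℤ_[ℓ]ˣ) (h1 : ((lamt : ℤ_[ℓ])) ^ ℓ = (lamt : ℤ_[ℓ]))
    (h2 : PadicInt.toZMod ((lamt : ℤ_[ℓ])) = (lam : ZMod ℓ)) :
    ∃ g ∈ G, (g : Matrix (Fin 2) (Fin 2) ℤ_[ℓ]) = (lamt : ℤ_[ℓ]) • 1 := by
  obtain ⟨g, hg, hred⟩ := hyp
  have hlamt : lamt ^ ℓ = lamt := Units.ext (by rw [Units.val_pow_eq_pow_val, h1])
  have hgred : GeneralLinearGroup.map PadicInt.toZMod g
      = GeneralLinearGroup.map PadicInt.toZMod (GeneralLinearGroup.scalar (Fin 2) lamt) := by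
    ext : 1
    simp [hred, h2, smul_one_eq_diagonal]
  refine ⟨GeneralLinearGroup.scalar (Fin 2) lamt, hG.mem_of_tendsto
    (PadicInt.tendsto_GL_pow_pow_of_map_toZMod_eq_scalar hlamt hgred)
    (Eventually.of_forall fun k => pow_mem hg _), ?_⟩
  simp [smul_one_eq_diagonal]
end

section
/- Let n be a positive integer, ℓ > 2 a prime, and G a closed subgroup of GL_2(ℤ_ℓ) with det(G) = ℤ_ℓ^×. Let H_n = {g ∈ G : g ≡ Id (mod ℓ^n)}. If ℓ does not divide the order of the reduction of G modulo ℓ, then det(H_n) = 1 + ℓ^n ℤ_ℓ. -/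
/-!
Determinants of elements congruent to `1` mod `ℓ ^ n` are congruent to `1` mod `ℓ ^ n`, since the
determinant commutes with reduction. Conversely, let `m` be the order of `G` mod `ℓ`. Hensel's lemma
gives `m`-th roots of principal units (`ℓ ∤ m`) and, `ℓ` being odd, `ℓ`-th roots of elements of
`1 + ℓ ^ (s + 1) ℤ_ℓ` in `1 + ℓ ^ s ℤ_ℓ`, so `x ≡ 1 mod ℓ ^ n` is `y ^ (m * ℓ ^ (n - 1))` for a
unit `y`. For `g ∈ G` with `det g = y`, `g ^ m ≡ 1 mod ℓ`, and each `ℓ`-th power gains one factor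
of `ℓ`, so `g ^ (m * ℓ ^ (n - 1))` lies in `H_n` and has determinant `x`.
-/

/-- The reduction map GL_2(ℤ_ℓ) → GL_2(𝔽_ℓ). -/
noncomputable def redGL (ℓ : ℕ) [Fact (Nat.Prime ℓ)] :
    GL (Fin 2) ℤ_[ℓ] →* GL (Fin 2) (ZMod ℓ) :=
  Units.map ((PadicInt.toZMod (p := ℓ)).mapMatrix).toMonoidHom

open Polynomial Finset

section CommRing

variable {R : Type*} [CommRing R]

theorem natCast_pow_succ_dvd_one_add_mul_pow_sub_one (p : ℕ) {j : ℕ} (hj : 1 ≤ j) (x : R) :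
    (p : R) ^ (j + 1) ∣ (1 + (p : R) ^ j * x) ^ p - 1 := by
  have hsq : (p : R) ^ (j + 1) ∣ ((p : R) ^ j * x) ^ 2 :=
    (pow_dvd_pow _ (by omega : j + 1 ≤ j * 2)).trans ⟨x ^ 2, by ring⟩
  have hlin : (p : R) ^ (j + 1) ∣ (p : R) ^ j * x * p := ⟨x, by ring⟩
  have := (hsq.trans (sq_dvd_add_pow_sub_sub ((p : R) ^ j * x) 1 p)).add hlin
  convert this using 1
  ring

theorem natCast_pow_three_dvd_one_add_mul_pow_sub {p : ℕ} (hp : Odd p) (b : R) :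
    (p : R) ^ 3 ∣ (1 + p * b) ^ p - (1 + p ^ 2 * b) := by
  have hfactor : (1 + p * b) ^ p - (1 + p ^ 2 * b) =
      ((∑ i ∈ range p, (1 + p * b) ^ i * 1 ^ (p - 1 - i)) - p * 1 ^ (p - 1)) * (p * b) := by
    have hgeom := geom_sum₂_mul (1 + (p : R) * b) 1 p
    rw [add_sub_cancel_left] at hgeom
    linear_combination -hgeom
  rw [hfactor, pow_succ]
  exact mul_dvd_mul (odd_sq_dvd_geom_sum₂_sub 1 b hp) (dvd_mul_right _ _)

theorem natCast_pow_succ_dvd_pow_sub_one_iff [IsDomain R] {p : ℕ} (hp : Prime (p : R))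
    (hodd : Odd p) {z : R} (hz : (p : R) ∣ z - 1) (s : ℕ) :
    (p : R) ^ (s + 1) ∣ z ^ p - 1 ↔ (p : R) ^ s ∣ z - 1 := by
  have hz' : ¬ (p : R) ∣ z := fun h => hp.not_dvd_one (by simpa using dvd_sub h hz)
  have hlte := emultiplicity_pow_prime_sub_pow_prime hp hodd (y := 1) (by simpa using hz) hz'
  rw [one_pow] at hlte
  rw [pow_dvd_iff_le_emultiplicity, pow_dvd_iff_le_emultiplicity, hlte, Nat.cast_succ,
    ENat.add_le_add_iff_right ENat.one_ne_top]

end CommRing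

section Ring

variable {S : Type*} [Ring S]

theorem natCast_pow_succ_dvd_pow_sub_one {p j : ℕ} (hj : 1 ≤ j) {A : S}
    (hA : (p : S) ^ j ∣ A - 1) : (p : S) ^ (j + 1) ∣ A ^ p - 1 := by
  obtain ⟨D, hD⟩ := hA
  -- the congruence only involves `D`, so it is the image of one in `ℤ[X]` under `X ↦ D`
  have h := map_dvd (aeval D) (natCast_pow_succ_dvd_one_add_mul_pow_sub_one (R := ℤ[X]) p hj X)
  rw [sub_eq_iff_eq_add'] at hD
  simpa [hD] using h

theorem natCast_pow_succ_dvd_pow_pow_sub_one {p : ℕ} {A : S} (hA : (p : S) ∣ A - 1) (k : ℕ) :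
    (p : S) ^ (k + 1) ∣ A ^ p ^ k - 1 := by
  induction k with
  | zero => simpa using hA
  | succ k ih =>
    rw [pow_succ p k, pow_mul]
    exact natCast_pow_succ_dvd_pow_sub_one (by omega) ih

end Ring

namespace Matrix

variable {n R : Type*} [Fintype n] [DecidableEq n] [CommRing R]

theorem scalar_dvd_iff {r : R} {M : Matrix n n R} : scalar n r ∣ M ↔ ∀ i j, r ∣ M i j := by
  constructor
  · rintro ⟨N, rfl⟩ i j
    simp [scalar_apply]
  · intro h
    choose N hN using h
    exact ⟨of N, ext fun i j => by simp [scalar_apply, hN i j]⟩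

theorem dvd_det_sub_one {r : R} {M : Matrix n n R} (hM : ∀ i j, r ∣ (M - 1) i j) :
    r ∣ M.det - 1 := by
  let π := Ideal.Quotient.mk (Ideal.span {r})
  have hπM : π.mapMatrix M = 1 := by
    have h : π.mapMatrix (M - 1) = 0 := by
      ext i j
      exact Ideal.Quotient.eq_zero_iff_mem.mpr (Ideal.mem_span_singleton.mpr (hM i j))
    rwa [map_sub, map_one, sub_eq_zero] at h
  rw [← Ideal.mem_span_singleton, ← Ideal.Quotient.eq_zero_iff_mem, map_sub, RingHom.map_det, hπM]
  simp

end Matrix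

theorem MonoidHom.map_pow_natCard_map_eq_one {G H : Type*} [Group G] [Group H] (f : G →* H)
    {K : Subgroup G} {g : G} (hg : g ∈ K) : f (g ^ Nat.card (K.map f)) = 1 := by
  rw [map_pow]
  exact congrArg Subtype.val (pow_card_eq_one' (x := (⟨f g, g, hg, rfl⟩ : K.map f)))

namespace PadicInt

variable {p : ℕ} [Fact p.Prime]

theorem isUnit_of_dvd_sub_one {x : ℤ_[p]} (hx : (p : ℤ_[p]) ∣ x - 1) : IsUnit x := by
  by_contra hu
  have hpx : (p : ℤ_[p]) ∣ x := by
    rwa [← Ideal.mem_span_singleton, ← maximalIdeal_eq_span_p, IsLocalRing.mem_maximalIdeal]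
  exact prime_p.not_dvd_one (by simpa using dvd_sub hpx hx)

theorem exists_pow_eq_of_not_dvd {m : ℕ} (hm : ¬ p ∣ m) {w : ℤ_[p]}
    (hw : (p : ℤ_[p]) ∣ w - 1) : ∃ y : ℤ_[p], y ^ m = w := by
  have hm_norm : ‖(m : ℤ_[p])‖ = 1 := by
    refine le_antisymm (norm_le_one _) (not_lt.mp fun h => hm ?_)
    rw [← Int.cast_natCast, norm_int_lt_one_iff_dvd] at h
    exact_mod_cast h
  have hnorm : ‖(X ^ m - C w : ℤ_[p][X]).aeval (1 : ℤ_[p])‖ <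
      ‖(X ^ m - C w : ℤ_[p][X]).derivative.aeval (1 : ℤ_[p])‖ ^ 2 := by
    simpa [derivative_X_pow, hm_norm, norm_lt_one_iff_dvd] using hw.neg_right
  obtain ⟨y, hy, -⟩ := hensels_lemma hnorm
  exact ⟨y, by simpa [sub_eq_zero] using hy⟩

theorem exists_pow_prime_eq_of_sq_dvd (hp : Odd p) {x : ℤ_[p]} (hx : (p : ℤ_[p]) ^ 2 ∣ x - 1) :
    ∃ z : ℤ_[p], (p : ℤ_[p]) ∣ z - 1 ∧ z ^ p = x := by
  obtain ⟨u, hu⟩ := hx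
  have hx : x = 1 + p ^ 2 * u := by linear_combination hu
  have hp_pos : (0 : ℝ) < (p : ℝ)⁻¹ := by simpa using (Fact.out : p.Prime).pos
  have hp_inv : (p : ℝ)⁻¹ < 1 :=
    inv_lt_one_of_one_lt₀ (by exact_mod_cast (Fact.out : p.Prime).one_lt)
  -- for odd `p`, `1 + p * u` is a root mod `p ^ 3`, beating `‖F' (1 + p * u)‖ ^ 2 = p ^ (-2)`
  have hFa : ‖(X ^ p - C x : ℤ_[p][X]).aeval (1 + p * u)‖ ≤ (p : ℝ)⁻¹ ^ 3 := by
    obtain ⟨c, hc⟩ := natCast_pow_three_dvd_one_add_mul_pow_sub hp u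
    simp only [coe_aeval_eq_eval, eval_sub, eval_pow, eval_X, eval_C, hx, hc, norm_mul, norm_pow,
      norm_p]
    exact mul_le_of_le_one_right (by positivity) (norm_le_one c)
  have hF'a : ‖(X ^ p - C x : ℤ_[p][X]).derivative.aeval (1 + p * u)‖ = (p : ℝ)⁻¹ := by
    have ha : ‖1 + (p : ℤ_[p]) * u‖ = 1 := isUnit_iff.mp (isUnit_of_dvd_sub_one ⟨u, by ring⟩)
    simp [derivative_X_pow, ha]
  obtain ⟨z, hz, hza, -⟩ := hensels_lemma (hFa.trans_lt (by
    rw [hF'a]; exact pow_lt_pow_right_of_lt_one₀ hp_pos hp_inv (by norm_num)))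
  refine ⟨z, ?_, by simpa [sub_eq_zero] using hz⟩
  have hza' : (p : ℤ_[p]) ∣ z - (1 + p * u) :=
    (norm_lt_one_iff_dvd _).mp (hza.trans (hF'a ▸ hp_inv))
  rw [show z - 1 = z - (1 + p * u) + p * u by ring]
  exact hza'.add (dvd_mul_right _ u)

theorem exists_pow_prime_pow_eq (hp : Odd p) (k : ℕ) {x : ℤ_[p]}
    (hx : (p : ℤ_[p]) ^ (k + 1) ∣ x - 1) : ∃ w : ℤ_[p], (p : ℤ_[p]) ∣ w - 1 ∧ w ^ p ^ k = x := by
  induction k generalizing x with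
  | zero => exact ⟨x, by simpa using hx, by simp⟩
  | succ k ih =>
    obtain ⟨z, hz, rfl⟩ := exists_pow_prime_eq_of_sq_dvd hp ((pow_dvd_pow _ (by omega)).trans hx)
    obtain ⟨w, hw, rfl⟩ := ih ((natCast_pow_succ_dvd_pow_sub_one_iff prime_p hp hz _).mp hx)
    exact ⟨w, hw, by rw [pow_succ, pow_mul]⟩

theorem exists_pow_mul_prime_pow_eq (hp : Odd p) {m : ℕ} (hm : ¬ p ∣ m) (k : ℕ) {x : ℤ_[p]}
    (hx : (p : ℤ_[p]) ^ (k + 1) ∣ x - 1) : ∃ y : ℤ_[p], y ^ (m * p ^ k) = x := by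
  obtain ⟨w, hw, rfl⟩ := exists_pow_prime_pow_eq hp k hx
  obtain ⟨y, rfl⟩ := exists_pow_eq_of_not_dvd hm hw
  exact ⟨y, pow_mul y m _⟩

end PadicInt

theorem dvd_sub_one_of_redGL_eq_one {ℓ : ℕ} [Fact (Nat.Prime ℓ)] {g : GL (Fin 2) ℤ_[ℓ]}
    (hg : redGL ℓ g = 1) (i j : Fin 2) :
    (ℓ : ℤ_[ℓ]) ∣ ((g : Matrix (Fin 2) (Fin 2) ℤ_[ℓ]) - 1) i j := by
  have hred : PadicInt.toZMod.mapMatrix ((g : Matrix (Fin 2) (Fin 2) ℤ_[ℓ]) - 1) = 0 := by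
    rw [map_sub, map_one, sub_eq_zero]
    exact congrArg Units.val hg
  rw [← Ideal.mem_span_singleton, ← PadicInt.maximalIdeal_eq_span_p, ← PadicInt.ker_toZMod,
    RingHom.mem_ker]
  exact congrFun (congrFun hred i) j

theorem stmt5_general (ℓ : ℕ) [Fact (Nat.Prime ℓ)] (hℓ : 2 < ℓ) (n : ℕ) (hn : 0 < n)
    (G : Subgroup (GL (Fin 2) ℤ_[ℓ]))
    (hdet : ∀ u : ℤ_[ℓ]ˣ, ∃ g ∈ G, ((g : Matrix (Fin 2) (Fin 2) ℤ_[ℓ])).det = u)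
    (hord : ¬ ℓ ∣ Nat.card (Subgroup.map (redGL ℓ) G)) :
    {x : ℤ_[ℓ] | ∃ g ∈ G,
        (∀ i j, ((ℓ : ℤ_[ℓ])) ^ n ∣ ((g : Matrix (Fin 2) (Fin 2) ℤ_[ℓ]) - 1) i j) ∧
        ((g : Matrix (Fin 2) (Fin 2) ℤ_[ℓ])).det = x}
      = {x : ℤ_[ℓ] | ((ℓ : ℤ_[ℓ])) ^ n ∣ x - 1} := by
  ext x
  constructor
  · rintro ⟨g, -, hg, rfl⟩
    exact Matrix.dvd_det_sub_one hg
  · intro hx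
    obtain ⟨k, rfl⟩ : ∃ k, n = k + 1 := ⟨n - 1, by omega⟩
    set m := Nat.card (G.map (redGL ℓ))
    have hodd : Odd ℓ := (Fact.out : ℓ.Prime).odd_of_ne_two hℓ.ne'
    obtain ⟨y, rfl⟩ := PadicInt.exists_pow_mul_prime_pow_eq hodd hord k hx
    have hm : m ≠ 0 := fun h => hord (h ▸ dvd_zero ℓ)
    have hy : IsUnit y := (isUnit_pow_iff (mul_ne_zero hm (by positivity))).mp
      (PadicInt.isUnit_of_dvd_sub_one ((dvd_pow_self _ k.succ_ne_zero).trans hx))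
    obtain ⟨g, hgG, hg⟩ := hdet hy.unit
    have hgm : (ℓ : Matrix (Fin 2) (Fin 2) ℤ_[ℓ]) ∣
        ((g ^ m : GL (Fin 2) ℤ_[ℓ]) : Matrix (Fin 2) (Fin 2) ℤ_[ℓ]) - 1 := by
      rw [← map_natCast (Matrix.scalar (Fin 2)), Matrix.scalar_dvd_iff]
      exact dvd_sub_one_of_redGL_eq_one ((redGL ℓ).map_pow_natCard_map_eq_one hgG)
    refine ⟨g ^ (m * ℓ ^ k), G.pow_mem hgG _, ?_, ?_⟩
    · rw [← Matrix.scalar_dvd_iff, map_pow, map_natCast, pow_mul, Units.val_pow_eq_pow_val]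
      exact natCast_pow_succ_dvd_pow_pow_sub_one hgm k
    · rw [Units.val_pow_eq_pow_val, Matrix.det_pow, hg, IsUnit.unit_spec]

/-- If G is a closed subgroup of GL_2(ℤ_ℓ) (ℓ > 2) with surjective determinant
and mod-ℓ image of order prime to ℓ, then the determinants of the elements of
G congruent to Id mod ℓ^n form exactly the group 1 + ℓ^n ℤ_ℓ. -/
theorem stmt5 (ℓ : ℕ) [Fact (Nat.Prime ℓ)] (hℓ : 2 < ℓ) (n : ℕ) (hn : 0 < n)
    (G : Subgroup (GL (Fin 2) ℤ_[ℓ])) (hG : IsClosed (G : Set (GL (Fin 2) ℤ_[ℓ])))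
    (hdet : ∀ u : ℤ_[ℓ]ˣ, ∃ g ∈ G, ((g : Matrix (Fin 2) (Fin 2) ℤ_[ℓ])).det = u)
    (hord : ¬ ℓ ∣ Nat.card (Subgroup.map (redGL ℓ) G)) :
    {x : ℤ_[ℓ] | ∃ g ∈ G,
        (∀ i j, ((ℓ : ℤ_[ℓ])) ^ n ∣ ((g : Matrix (Fin 2) (Fin 2) ℤ_[ℓ]) - 1) i j) ∧
        ((g : Matrix (Fin 2) (Fin 2) ℤ_[ℓ])).det = x}
      = {x : ℤ_[ℓ] | ((ℓ : ℤ_[ℓ])) ^ n ∣ x - 1} :=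
  stmt5_general ℓ hℓ n hn G hdet hord
end

section
/- Let ℓ > 2 be a prime and G a closed subgroup of GL_2(ℤ_ℓ) with det(G) = ℤ_ℓ^×, whose mod-ℓ image G_ℓ contains τ = [[0,1],[1,0]], and such that ℓ does not divide #G_ℓ. If G_ℓ contains an element u with uτ = −τu, then G contains all scalar matrices λ·Id with λ ∈ 1 + ℓℤ_ℓ. -/
/-!
An element of G whose determinant is a #G_ℓ-th root of λ (Hensel), raised to the power #G_ℓ,
reduces to 1 modulo ℓ and has determinant λ, since ℓ ∤ #G_ℓ.

If g = ν + ℓⁿA with n ≥ 1 and t, v ∈ G lift τ and u, then the product of the conjugates of g by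
1, t, v, tv is ν⁴ + ℓⁿν³ Σ hAh⁻¹ (mod ℓ²ⁿ), and modulo ℓ the sum of the conjugates of A by
1, τ, u, τu is the scalar 2·tr A. So this product is a scalar κ modulo ℓⁿ⁺¹; its determinant is
ν⁸ and κ + ν⁴ ≡ 2 is a unit, which forces κ ≡ ν⁴ (mod ℓⁿ⁺¹). Using fourth roots, induction gives
gₙ ∈ G with gₙ ≡ λ (mod ℓⁿ⁺¹), and gₙ → λ·Id lies in G because G is closed.
-/

open Matrix Filter Topology

section Algebra

variable {R B : Type*} [CommRing R] [Ring B] [Algebra R B]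

lemma Units.conj_smul_one_add (h : Bˣ) (ν x : R) (A : B) :
    ↑h * (ν • 1 + x • A) * ↑h⁻¹ = ν • 1 + x • (↑h * A * ↑h⁻¹) := by
  rw [mul_add, add_mul, mul_smul_comm, smul_mul_assoc, mul_one, Units.mul_inv,
    mul_smul_comm, smul_mul_assoc]

lemma exists_prod_four_smul_one_add (ν x : R) (B₁ B₂ B₃ B₄ : B) :
    ∃ C : B, (ν • 1 + x • B₁) * (ν • 1 + x • B₂) * (ν • 1 + x • B₃) * (ν • 1 + x • B₄)
      = ν ^ 4 • 1 + x • ν ^ 3 • (B₁ + B₂ + B₃ + B₄) + x ^ 2 • C := by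
  refine ⟨ν ^ 2 • (B₁ * B₂ + B₁ * B₃ + B₂ * B₃ + B₁ * B₄ + B₂ * B₄ + B₃ * B₄)
    + x • ν • (B₁ * B₂ * B₃ + B₁ * B₂ * B₄ + B₁ * B₃ * B₄ + B₂ * B₃ * B₄)
    + x ^ 2 • (B₁ * B₂ * B₃ * B₄), ?_⟩
  simp only [mul_add, add_mul, smul_mul_assoc, mul_smul_comm, smul_smul, mul_one, one_mul,
    smul_add]
  module

end Algebra

section Conj

variable {H : Type*} [Group H]

def conjProd (t v g : H) : H := g * (t * g * t⁻¹) * (v * g * v⁻¹) * (t * v * g * (t * v)⁻¹)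

lemma conjProd_mem {K : Subgroup H} {t v g : H} (ht : t ∈ K) (hv : v ∈ K) (hg : g ∈ K) :
    conjProd t v g ∈ K := by
  have hconj {h : H} (hh : h ∈ K) : h * g * h⁻¹ ∈ K := K.mul_mem (K.mul_mem hh hg) (K.inv_mem hh)
  exact K.mul_mem (K.mul_mem (K.mul_mem hg (hconj ht)) (hconj hv)) (hconj (K.mul_mem ht hv))

lemma Matrix.GeneralLinearGroup.det_conjProd {n R : Type*} [Fintype n] [DecidableEq n]
    [CommRing R] (t v g : GL n R) :
    (↑(conjProd t v g) : Matrix n n R).det = (g : Matrix n n R).det ^ 4 := by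
  have hconj (h : GL n R) : (↑(h * g * h⁻¹) : Matrix n n R).det = (g : Matrix n n R).det := by
    rw [Units.val_mul, Units.val_mul, det_mul, det_mul, mul_right_comm, ← det_mul,
      Units.mul_inv, det_one, one_mul]
  rw [conjProd, Units.val_mul, Units.val_mul, Units.val_mul, det_mul, det_mul, det_mul, hconj,
    hconj, hconj]
  ring

end Conj

section TwoByTwo

variable {R : Type*} [CommRing R]

local notation "𝕄" => Matrix (Fin 2) (Fin 2) R
local notation "σ" => (!![0, 1; 1, 0] : 𝕄)

lemma Matrix.add_conj_swap (X : 𝕄) : X + σ * X * σ = X.trace • (1 : 𝕄) + (X * σ).trace • σ := by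
  ext i j
  fin_cases i <;> fin_cases j <;>
    simp [Matrix.mul_apply, Fin.sum_univ_two, Matrix.trace_fin_two, Matrix.vecMul, dotProduct] <;>
    ring

lemma Matrix.swap_mul_swap : σ * σ = 1 := by
  ext i j
  fin_cases i <;> fin_cases j <;> simp [Matrix.mul_apply, Fin.sum_univ_two]

lemma Matrix.sum_conj_swap_eq_smul_one {U U' : 𝕄} (hUU' : U * U' = 1) (hU'U : U' * U = 1)
    (hanti : U * σ = -(σ * U)) (A : 𝕄) :
    A + σ * A * σ + U * A * U' + (σ * U) * A * (U' * σ) = (2 * A.trace) • (1 : 𝕄) := by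
  have hanti' : U' * σ = -(σ * U') := by
    calc U' * σ = U' * (σ * U) * U' := by rw [mul_assoc, mul_assoc, hUU', mul_one]
      _ = -(U' * U * σ * U') := by rw [← neg_neg (σ * U), ← hanti]; noncomm_ring
      _ = -(σ * U') := by rw [hU'U, one_mul]
  set C : 𝕄 := U * A * U'
  have htrace : C.trace = A.trace := by
    rw [Matrix.trace_mul_cycle, hU'U, one_mul]
  have htrace_swap : (C * σ).trace = -(A * σ).trace := by
    rw [show C * σ = -(U * (A * σ) * U') by simp only [C, mul_assoc, hanti']; noncomm_ring,
      Matrix.trace_neg, Matrix.trace_mul_cycle, hU'U, one_mul]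
  calc A + σ * A * σ + U * A * U' + (σ * U) * A * (U' * σ)
      = (A + σ * A * σ) + (C + σ * C * σ) := by simp only [C, mul_assoc]; abel
    _ = (2 * A.trace) • 1 := by
        rw [Matrix.add_conj_swap, Matrix.add_conj_swap, htrace, htrace_swap]
        module

lemma Matrix.det_smul_one_add (c y : R) (D : 𝕄) :
    (c • (1 : 𝕄) + y • D).det = c ^ 2 + y * (c * D.trace + y * D.det) := by
  simp only [det_fin_two, Fin.isValue, Matrix.add_apply, Matrix.smul_apply, one_apply_eq,
    smul_eq_mul, mul_one, ne_eq, zero_ne_one, not_false_eq_true, one_apply_ne, mul_zero, zero_add,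
    one_ne_zero, trace_fin_two]
  ring

lemma Matrix.exists_smul_one_add_eq_of_det_eq_sq {κ μ y : R} {D : 𝕄}
    (hdet : (κ • 1 + y • D).det = μ ^ 2) (hunit : IsUnit (κ + μ)) :
    ∃ D' : 𝕄, κ • 1 + y • D = μ • 1 + y • D' := by
  rw [det_smul_one_add] at hdet
  obtain ⟨e, he⟩ : y ∣ κ - μ := by
    refine (hunit.dvd_mul_right).mp ⟨-(κ * D.trace + y * D.det), ?_⟩
    linear_combination hdet
  exact ⟨D + e • 1, by rw [show κ = μ + y * e by linear_combination he]; module⟩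

end TwoByTwo

lemma Matrix.GeneralLinearGroup.tendsto_of_tendsto_val {n R ι : Type*} [Fintype n]
    [DecidableEq n] [NormedCommRing R] [CompleteSpace R] {l : Filter ι} {g : ι → GL n R}
    {L : GL n R} (h : Tendsto (fun i ↦ (g i : Matrix n n R)) l (𝓝 L)) : Tendsto g l (𝓝 L) := by
  rw [Units.isInducing_embedProduct.tendsto_nhds_iff]
  refine h.prodMk_nhds ((MulOpposite.continuous_op.tendsto _).comp ?_)
  have hinv : ContinuousAt Inv.inv (L : Matrix n n R) :=
    continuousAt_matrix_inv _ (NormedRing.inverse_continuousAt (isUnits_det_units L).unit)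
  simpa only [Function.comp_def, coe_units_inv] using hinv.tendsto.comp h

namespace PadicInt

variable {p : ℕ} [Fact p.Prime]

lemma isUnit_iff_not_dvd {z : ℤ_[p]} : IsUnit z ↔ ¬(p : ℤ_[p]) ∣ z := by
  rw [← norm_lt_one_iff_dvd, ← not_isUnit_iff, not_not]

lemma natCast_dvd_natCast_iff {k : ℕ} : (p : ℤ_[p]) ∣ k ↔ p ∣ k := by
  simpa [Int.natCast_dvd_natCast] using pow_p_dvd_int_iff (p := p) 1 k

lemma isUnit_of_dvd_sub_natCast {x : ℤ_[p]} {k : ℕ} (h : (p : ℤ_[p]) ∣ x - k) (hk : ¬p ∣ k) :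
    IsUnit x :=
  isUnit_iff_not_dvd.mpr fun hx ↦ hk <| natCast_dvd_natCast_iff.mp <| by
    simpa using dvd_sub hx h

lemma natCast_dvd_iff_toZMod_eq_zero {x : ℤ_[p]} : (p : ℤ_[p]) ∣ x ↔ toZMod x = 0 := by
  rw [← RingHom.mem_ker, ker_toZMod, maximalIdeal_eq_span_p, Ideal.mem_span_singleton]

lemma exists_pow_eq_of_dvd_sub_one {k : ℕ} (hk : ¬p ∣ k) {a : ℤ_[p]} (ha : (p : ℤ_[p]) ∣ a - 1) :
    ∃ b : ℤ_[p], b ^ k = a ∧ (p : ℤ_[p]) ∣ b - 1 := by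
  set F : Polynomial ℤ_[p] := .X ^ k - .C a
  have hderiv : ‖F.derivative.aeval (1 : ℤ_[p])‖ = 1 := by
    rw [show F.derivative.aeval (1 : ℤ_[p]) = k by simp [F, Polynomial.derivative_X_pow],
      ← isUnit_iff, isUnit_iff_not_dvd, natCast_dvd_natCast_iff]
    exact hk
  have hval : ‖F.aeval (1 : ℤ_[p])‖ < ‖F.derivative.aeval (1 : ℤ_[p])‖ ^ 2 := by
    rw [hderiv, one_pow, show F.aeval (1 : ℤ_[p]) = -(a - 1) by simp [F], norm_neg,
      norm_lt_one_iff_dvd]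
    exact ha
  obtain ⟨b, hb, hb1, -⟩ := hensels_lemma hval
  refine ⟨b, sub_eq_zero.mp (by simpa [F] using hb), ?_⟩
  rwa [← norm_lt_one_iff_dvd, ← hderiv]

lemma tendsto_pow_mul_nhds_zero (c : ℕ → ℤ_[p]) :
    Tendsto (fun k ↦ (p : ℤ_[p]) ^ k * c k) atTop (𝓝 0) := by
  have hp : ‖(p : ℤ_[p])‖ < 1 := by
    rw [norm_p]; exact inv_lt_one_of_one_lt₀ (by exact_mod_cast (Fact.out : p.Prime).one_lt)
  refine squeeze_zero_norm (fun k ↦ ?_) (tendsto_pow_atTop_nhds_zero_of_lt_one (norm_nonneg _) hp)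
  rw [norm_mul, norm_pow]
  exact mul_le_of_le_one_right (by positivity) (norm_le_one _)

lemma tendsto_add_pow_smul {m n : Type*} (L : Matrix m n ℤ_[p]) (A : ℕ → Matrix m n ℤ_[p]) :
    Tendsto (fun k ↦ L + (p : ℤ_[p]) ^ k • A k) atTop (𝓝 L) := by
  refine tendsto_pi_nhds.mpr fun i ↦ tendsto_pi_nhds.mpr fun j ↦ ?_
  simpa using tendsto_const_nhds.add (tendsto_pow_mul_nhds_zero fun k ↦ A k i j)

lemma exists_eq_add_smul_of_map_toZMod_eq {m n : Type*} {X C : Matrix m n ℤ_[p]}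
    (h : X.map toZMod = C.map toZMod) : ∃ A : Matrix m n ℤ_[p], X = C + (p : ℤ_[p]) • A := by
  have hdvd (i j) : (p : ℤ_[p]) ∣ X i j - C i j := by
    rw [natCast_dvd_iff_toZMod_eq_zero, map_sub, sub_eq_zero]
    exact congrFun (congrFun h i) j
  choose A hA using hdvd
  exact ⟨.of A, by ext i j; simp [← hA]⟩

end PadicInt

section Lifting

variable {ℓ : ℕ} [Fact ℓ.Prime]

local notation "M" => Matrix (Fin 2) (Fin 2) ℤ_[ℓ]
local notation "Mℓ" => Matrix (Fin 2) (Fin 2) (ZMod ℓ)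
local notation "σ" => (!![0, 1; 1, 0] : Mℓ)

lemma exists_sum_conj_eq_smul_one_add {t v : GL (Fin 2) ℤ_[ℓ]} (ht : (redGL ℓ t : Mℓ) = σ)
    (hanti : (redGL ℓ v : Mℓ) * σ = -(σ * redGL ℓ v)) (A : M) :
    ∃ E : M, A + (t : M) * A * (↑t⁻¹ : M) + (v : M) * A * (↑v⁻¹ : M)
      + (↑(t * v) : M) * A * (↑(t * v)⁻¹ : M) = (2 * A.trace) • 1 + (ℓ : ℤ_[ℓ]) • E := by
  refine PadicInt.exists_eq_add_smul_of_map_toZMod_eq ?_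
  simp only [← RingHom.mapMatrix_apply]
  have hred (h : GL (Fin 2) ℤ_[ℓ]) (X : M) : PadicInt.toZMod.mapMatrix ((h : M) * X * (↑h⁻¹ : M))
      = (↑(redGL ℓ h) : Mℓ) * PadicInt.toZMod.mapMatrix X * (↑(redGL ℓ h⁻¹) : Mℓ) := by
    rw [map_mul, map_mul]; rfl
  have ht_inv : (↑(redGL ℓ t⁻¹) : Mℓ) = σ := by
    have ht_sq : redGL ℓ t * redGL ℓ t = 1 :=
      Units.ext (by rw [Units.val_mul, ht, swap_mul_swap]; rfl)
    rw [map_inv, inv_eq_of_mul_eq_one_right ht_sq, ht]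
  have htv : (↑(redGL ℓ (t * v)) : Mℓ) = σ * (↑(redGL ℓ v) : Mℓ) := by
    rw [map_mul, Units.val_mul, ht]
  have htv_inv : (↑(redGL ℓ (t * v)⁻¹) : Mℓ) = (↑(redGL ℓ v⁻¹) : Mℓ) * σ := by
    rw [_root_.mul_inv_rev, map_mul, Units.val_mul, ht_inv]
  rw [map_add, map_add, map_add, hred, hred, hred, ht, ht_inv, htv, htv_inv,
    sum_conj_swap_eq_smul_one (by rw [map_inv, Units.mul_inv]) (by rw [map_inv, Units.inv_mul])
      hanti]
  ext i j
  simp only [RingHom.mapMatrix_apply, ← AddMonoidHom.map_trace, map_apply, Matrix.smul_apply,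
    one_apply, smul_eq_mul]
  split_ifs <;> simp [map_ofNat]

lemma exists_val_conjProd_eq_smul_one_add {t v g : GL (Fin 2) ℤ_[ℓ]} {n : ℕ} {ν : ℤ_[ℓ]} {A : M}
    (ht : (redGL ℓ t : Mℓ) = σ) (hanti : (redGL ℓ v : Mℓ) * σ = -(σ * redGL ℓ v))
    (hg : (g : M) = ν • 1 + (ℓ : ℤ_[ℓ]) ^ (n + 1) • A) :
    ∃ D : M, (↑(conjProd t v g) : M)
      = (ν ^ 4 + (ℓ : ℤ_[ℓ]) ^ (n + 1) * (ν ^ 3 * (2 * A.trace))) • 1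
        + (ℓ : ℤ_[ℓ]) ^ (n + 2) • D := by
  have hconj (h : GL (Fin 2) ℤ_[ℓ]) : (↑(h * g * h⁻¹) : M)
      = ν • 1 + (ℓ : ℤ_[ℓ]) ^ (n + 1) • ((h : M) * A * (↑h⁻¹ : M)) := by
    rw [Units.val_mul, Units.val_mul, hg, Units.conj_smul_one_add]
  obtain ⟨C, hC⟩ := exists_prod_four_smul_one_add ν ((ℓ : ℤ_[ℓ]) ^ (n + 1)) A
    ((t : M) * A * (↑t⁻¹ : M)) ((v : M) * A * (↑v⁻¹ : M)) ((↑(t * v) : M) * A * (↑(t * v)⁻¹ : M))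
  obtain ⟨E, hE⟩ := exists_sum_conj_eq_smul_one_add ht hanti A
  refine ⟨ν ^ 3 • E + (ℓ : ℤ_[ℓ]) ^ n • C, ?_⟩
  rw [conjProd, Units.val_mul, Units.val_mul, Units.val_mul, hconj, hconj, hconj, hg, hC, hE]
  match_scalars <;> ring

lemma exists_val_conjProd_eq_pow_four_smul_one_add (hℓ : 2 < ℓ) {t v g : GL (Fin 2) ℤ_[ℓ]}
    {n : ℕ} {ν : ℤ_[ℓ]} {A : M} (ht : (redGL ℓ t : Mℓ) = σ)
    (hanti : (redGL ℓ v : Mℓ) * σ = -(σ * redGL ℓ v)) (hν : (ℓ : ℤ_[ℓ]) ∣ ν - 1)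
    (hdet : (g : M).det = ν ^ 2) (hg : (g : M) = ν • 1 + (ℓ : ℤ_[ℓ]) ^ (n + 1) • A) :
    ∃ D : M, (↑(conjProd t v g) : M) = ν ^ 4 • 1 + (ℓ : ℤ_[ℓ]) ^ (n + 2) • D := by
  obtain ⟨D, hD⟩ := exists_val_conjProd_eq_smul_one_add ht hanti hg
  have hunit : IsUnit (ν ^ 4 + (ℓ : ℤ_[ℓ]) ^ (n + 1) * (ν ^ 3 * (2 * A.trace)) + ν ^ 4) := by
    refine PadicInt.isUnit_of_dvd_sub_natCast (k := 2) ?_ fun h ↦ by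
      have := Nat.le_of_dvd two_pos h; omega
    rw [show ν ^ 4 + (ℓ : ℤ_[ℓ]) ^ (n + 1) * (ν ^ 3 * (2 * A.trace)) + ν ^ 4 - (2 : ℕ)
      = (ν - 1) * (2 * (ν ^ 3 + ν ^ 2 + ν + 1)) + ℓ * (ℓ ^ n * (ν ^ 3 * (2 * A.trace))) by
        push_cast; ring]
    exact dvd_add (dvd_mul_of_dvd_left hν _) (dvd_mul_right _ _)
  obtain ⟨D', hD'⟩ := exists_smul_one_add_eq_of_det_eq_sq
    (by rw [← hD, GeneralLinearGroup.det_conjProd, hdet]; ring) hunit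
  exact ⟨D', hD.trans hD'⟩

variable {G : Subgroup (GL (Fin 2) ℤ_[ℓ])}

lemma exists_mem_redGL_eq_one_and_det_eq (hdet : ∀ u : ℤ_[ℓ]ˣ, ∃ g ∈ G, (g : M).det = u)
    (hord : ¬ℓ ∣ Nat.card (G.map (redGL ℓ))) {a : ℤ_[ℓ]} (ha : (ℓ : ℤ_[ℓ]) ∣ a - 1) :
    ∃ g ∈ G, redGL ℓ g = 1 ∧ (g : M).det = a := by
  obtain ⟨b, hba, hb⟩ := PadicInt.exists_pow_eq_of_dvd_sub_one hord ha
  have hbunit : IsUnit b :=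
    PadicInt.isUnit_of_dvd_sub_natCast (k := 1) (by simpa using hb) (Fact.out : ℓ.Prime).not_dvd_one
  obtain ⟨g, hgG, hgdet⟩ := hdet hbunit.unit
  refine ⟨g ^ Nat.card (G.map (redGL ℓ)), pow_mem hgG _, ?_, ?_⟩
  · rw [map_pow]
    exact congrArg Subtype.val
      (pow_card_eq_one' (x := (⟨redGL ℓ g, Subgroup.mem_map_of_mem _ hgG⟩ : G.map (redGL ℓ))))
  · rw [Units.val_pow_eq_pow_val, det_pow, hgdet, hbunit.unit_spec, hba]

lemma exists_mem_det_eq_sq_and_val_eq_smul_one_add (hℓ : 2 < ℓ)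
    (hdet : ∀ u : ℤ_[ℓ]ˣ, ∃ g ∈ G, (g : M).det = u)
    (hord : ¬ℓ ∣ Nat.card (G.map (redGL ℓ))) {t v : GL (Fin 2) ℤ_[ℓ]} (htG : t ∈ G) (hvG : v ∈ G)
    (ht : (redGL ℓ t : Mℓ) = σ) (hanti : (redGL ℓ v : Mℓ) * σ = -(σ * redGL ℓ v)) (n : ℕ)
    {μ : ℤ_[ℓ]} (hμ : (ℓ : ℤ_[ℓ]) ∣ μ - 1) :
    ∃ g ∈ G, (g : M).det = μ ^ 2 ∧ ∃ A : M, (g : M) = μ • 1 + (ℓ : ℤ_[ℓ]) ^ (n + 1) • A := by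
  induction n generalizing μ with
  | zero =>
    obtain ⟨g, hgG, hred, hgdet⟩ := exists_mem_redGL_eq_one_and_det_eq hdet hord (a := μ ^ 2)
      (by rw [show μ ^ 2 - 1 = (μ - 1) * (μ + 1) by ring]; exact dvd_mul_of_dvd_left hμ _)
    obtain ⟨A, hA⟩ := PadicInt.exists_eq_add_smul_of_map_toZMod_eq (X := (g : M)) (C := 1)
      (by rw [Matrix.map_one _ (map_zero _) (map_one _)]; exact congrArg Units.val hred)
    obtain ⟨e, he⟩ := hμ
    refine ⟨g, hgG, hgdet, A - e • 1, ?_⟩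
    rw [hA, show μ = 1 + ℓ * e by linear_combination he]
    module
  | succ n ih =>
    have h4 : ¬ℓ ∣ 4 := fun h ↦ by
      have := Nat.le_of_dvd two_pos ((Fact.out : ℓ.Prime).dvd_of_dvd_pow (n := 2) h); omega
    obtain ⟨ν, rfl, hν⟩ := PadicInt.exists_pow_eq_of_dvd_sub_one h4 hμ
    obtain ⟨g, hgG, hgdet, A, hgA⟩ := ih hν
    refine ⟨conjProd t v g, conjProd_mem htG hvG hgG, ?_,
      exists_val_conjProd_eq_pow_four_smul_one_add hℓ ht hanti hν hgdet hgA⟩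
    rw [GeneralLinearGroup.det_conjProd, hgdet]; ring

end Lifting

/-- Let ℓ > 2 be prime, G a closed subgroup of GL_2(ℤ_ℓ) with surjective
determinant, whose mod-ℓ image G_ℓ has order prime to ℓ and contains
τ = [[0,1],[1,0]] as well as an element u anticommuting with τ. Then G
contains all scalars λ·Id with λ ≡ 1 (mod ℓ). -/
theorem stmt9 (ℓ : ℕ) [Fact (Nat.Prime ℓ)] (hℓ : 2 < ℓ)
    (G : Subgroup (GL (Fin 2) ℤ_[ℓ])) (hG : IsClosed (G : Set (GL (Fin 2) ℤ_[ℓ])))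
    (hdet : ∀ u : ℤ_[ℓ]ˣ, ∃ g ∈ G, ((g : Matrix (Fin 2) (Fin 2) ℤ_[ℓ])).det = u)
    (hord : ¬ ℓ ∣ Nat.card (Subgroup.map (redGL ℓ) G))
    (τ : GL (Fin 2) (ZMod ℓ))
    (hτm : (τ : Matrix (Fin 2) (Fin 2) (ZMod ℓ)) = !![0, 1; 1, 0])
    (hτ : τ ∈ Subgroup.map (redGL ℓ) G)
    (u : GL (Fin 2) (ZMod ℓ)) (hu : u ∈ Subgroup.map (redGL ℓ) G)
    (hanti : (u : Matrix (Fin 2) (Fin 2) (ZMod ℓ)) * (τ : Matrix (Fin 2) (Fin 2) (ZMod ℓ))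
      = -((τ : Matrix (Fin 2) (Fin 2) (ZMod ℓ)) * (u : Matrix (Fin 2) (Fin 2) (ZMod ℓ)))) :
    ∀ lam : ℤ_[ℓ], (ℓ : ℤ_[ℓ]) ∣ lam - 1 →
      ∃ g ∈ G, (g : Matrix (Fin 2) (Fin 2) ℤ_[ℓ]) = lam • (1 : Matrix (Fin 2) (Fin 2) ℤ_[ℓ]) := by
  intro lam hlam
  obtain ⟨t, htG, rfl⟩ := Subgroup.mem_map.mp hτ
  obtain ⟨v, hvG, rfl⟩ := Subgroup.mem_map.mp hu
  rw [hτm] at hanti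
  choose g hgG _ A hA using fun n ↦
    exists_mem_det_eq_sq_and_val_eq_smul_one_add hℓ hdet hord htG hvG hτm hanti n hlam
  obtain ⟨L, hL⟩ : IsUnit (lam • (1 : Matrix (Fin 2) (Fin 2) ℤ_[ℓ])) := by
    simpa [Algebra.algebraMap_eq_smul_one] using
      (PadicInt.isUnit_of_dvd_sub_natCast (k := 1) (by simpa using hlam)
        (Fact.out : ℓ.Prime).not_dvd_one).map (algebraMap ℤ_[ℓ] (Matrix (Fin 2) (Fin 2) ℤ_[ℓ]))
  refine ⟨L, hG.closure_subset (mem_closure_of_tendsto (b := atTop) ?_ (.of_forall hgG)), hL⟩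
  apply GeneralLinearGroup.tendsto_of_tendsto_val
  simpa only [hL, hA, pow_succ, mul_smul] using
    PadicInt.tendsto_add_pow_smul (lam • 1) fun n ↦ (ℓ : ℤ_[ℓ]) • A n
end

section
/- (Sah's Lemma) Let G be a profinite group, M a continuous G-module, and g an element of the center of G. Then the endomorphism x ↦ g·x − x of M induces the zero map on H¹(G, M). In particular, if x ↦ g·x − x is an automorphism of M, then H¹(G, M) = 0. -/
/-!
A central element `g` acts on `M` by a `G`-equivariant map `δ x = g • x - x`. Comparing the
cocycle identity at `g * a` and at `a * g` gives `δ (f a) = a • f g - f g`, so `δ ∘ f` is the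
coboundary of `f g`. If `δ` is bijective, pick `n` with `δ n = f g`; then `δ ∘ f` is also the
image under `δ` of the coboundary of `n`, and injectivity of `δ` makes `f` that coboundary.
-/

open groupCohomology

section Cocycle

variable {G M : Type*} [AddCommGroup M]

theorem smul_sub_self_eq_of_isCocycle₁ [Mul G] [SMul G M] {f : G → M} (hf : IsCocycle₁ f)
    {g a : G} (h : Commute g a) : g • f a - f a = a • f g - f g := by
  have hga : g • f a + f g = a • f g + f a := by rw [← hf, ← hf, h.eq]
  rw [sub_eq_sub_iff_add_eq_add, add_comm (g • f a), ← hga, add_comm]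

theorem smul_sub_self_smul_sub_self_comm [Monoid G] [DistribMulAction G M] {g a : G}
    (h : Commute g a) (n : M) :
    g • (a • n - n) - (a • n - n) = a • (g • n - n) - (g • n - n) := by
  rw [smul_sub, smul_sub, smul_smul, smul_smul, h.eq]
  abel

theorem isCoboundary₁_smul_sub_self_of_isCocycle₁ [Mul G] [SMul G M] {f : G → M}
    (hf : IsCocycle₁ f) {g : G} (hg : ∀ a, Commute g a) :
    IsCoboundary₁ fun a => g • f a - f a :=
  ⟨f g, fun a => (smul_sub_self_eq_of_isCocycle₁ hf (hg a)).symm⟩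

theorem isCoboundary₁_of_isCocycle₁_of_injective [Monoid G] [DistribMulAction G M]
    {f : G → M} (hf : IsCocycle₁ f) {g : G} (hg : ∀ a, Commute g a)
    (hinj : Function.Injective fun x : M => g • x - x) {n : M} (hn : g • n - n = f g) :
    IsCoboundary₁ f :=
  ⟨n, fun a => hinj <| by
    dsimp only
    rw [smul_sub_self_smul_sub_self_comm (hg a), hn, smul_sub_self_eq_of_isCocycle₁ hf (hg a)]⟩

end Cocycle

/-- Sah's Lemma: if g is central in G and M is a G-module, then x ↦ g·x - x
induces the zero map on H¹(G, M) (stated at the level of 1-cocycles: for any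
cocycle f, the cocycle a ↦ g·f(a) - f(a) is a coboundary); in particular if
x ↦ g·x - x is bijective then every 1-cocycle is a coboundary, i.e. H¹(G,M)=0. -/
theorem stmt11 {G : Type*} [Group G] {M : Type*} [AddCommGroup M]
    [DistribMulAction G M] (g : G) (hg : g ∈ Subgroup.center G)
    (f : G → M) (hf : ∀ a b : G, f (a * b) = f a + a • f b) :
    (∃ m : M, ∀ a : G, g • f a - f a = a • m - m) ∧
      (Function.Bijective (fun x : M => g • x - x) →
        ∃ m : M, ∀ a : G, f a = a • m - m) := by
  have hcocycle : IsCocycle₁ f := fun a b => by rw [hf, add_comm]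
  have hcomm : ∀ a, Commute g a := fun a => (Subgroup.mem_center_iff.mp hg a).symm
  refine ⟨?_, fun hbij => ?_⟩
  · obtain ⟨m, hm⟩ := isCoboundary₁_smul_sub_self_of_isCocycle₁ hcocycle hcomm
    exact ⟨m, fun a => (hm a).symm⟩
  · obtain ⟨n, hn⟩ := hbij.2 (f g)
    obtain ⟨m, hm⟩ := isCoboundary₁_of_isCocycle₁_of_injective hcocycle hcomm hbij.1 hn
    exact ⟨m, fun a => (hm a).symm⟩
end

section
/- Let G be a subgroup of GL_2(𝔽_13) with det(G) = 𝔽_13^× whose image in PGL_2(𝔽_13) is isomorphic to a subgroup of S_4 or of A_5. Then G contains a scalar matrix different from ±Id. -/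
/-!
Pick `g ∈ G` whose determinant generates `𝔽₁₃ˣ`, a cyclic group of order 12. Its image in
`S₄` or `A₅` has some order `k < 12`, so `g ^ k` is a scalar `c • 1`, and comparing
determinants gives `c ^ 2 = det g ^ k ≠ 1`, i.e. `c ≠ ±1`.
-/

open Matrix

lemma Matrix.det_fin_two_smul_one {R : Type*} [CommRing R] (c : R) :
    (c • (1 : Matrix (Fin 2) (Fin 2) R)).det = c ^ 2 := by
  rw [det_smul, det_one, Fintype.card_fin, mul_one]

set_option maxRecDepth 10000 in
lemma Equiv.Perm.orderOf_le_four (σ : Equiv.Perm (Fin 4)) : orderOf σ ≤ 4 := by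
  have h : σ ^ 4 = 1 ∨ σ ^ 3 = 1 := by revert σ; decide
  rcases h with h | h
  · exact orderOf_le_of_pow_eq_one (by norm_num) h
  · exact (orderOf_le_of_pow_eq_one (by norm_num) h).trans (by norm_num)

set_option maxRecDepth 10000 in
lemma alternatingGroup.orderOf_le_five (σ : alternatingGroup (Fin 5)) : orderOf σ ≤ 5 := by
  have h : σ ^ 5 = 1 ∨ σ ^ 4 = 1 ∨ σ ^ 3 = 1 := by revert σ; decide
  rcases h with h | h | h
  · exact orderOf_le_of_pow_eq_one (by norm_num) h
  · exact (orderOf_le_of_pow_eq_one (by norm_num) h).trans (by norm_num)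
  · exact (orderOf_le_of_pow_eq_one (by norm_num) h).trans (by norm_num)

lemma ZMod.orderOf_two_thirteen : orderOf (2 : ZMod 13) = 12 :=
  orderOf_eq_iff (by norm_num) |>.mpr ⟨by decide, by decide⟩

theorem exists_mem_eq_smul_one_sq_ne_one {K H : Type*} [Field K] [Group H] [Finite H]
    (G : Subgroup (GL (Fin 2) K)) (φ : G →* H)
    (hφ : ∀ x : G, φ x = 1 → ∃ c : K, ((x : GL (Fin 2) K) : Matrix (Fin 2) (Fin 2) K) = c • 1)
    {u : K} (hu : ∃ g ∈ G, (g : Matrix (Fin 2) (Fin 2) K).det = u)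
    (hH : ∀ h : H, orderOf h < orderOf u) :
    ∃ g ∈ G, ∃ c : K, (g : Matrix (Fin 2) (Fin 2) K) = c • 1 ∧ c ^ 2 ≠ 1 := by
  obtain ⟨g, hg, rfl⟩ := hu
  set k := orderOf (φ ⟨g, hg⟩)
  obtain ⟨c, hc⟩ := hφ (⟨g, hg⟩ ^ k) (by rw [map_pow, pow_orderOf_eq_one])
  have hc : ((g ^ k : GL (Fin 2) K) : Matrix (Fin 2) (Fin 2) K) = c • 1 := hc
  have hdet : (g : Matrix (Fin 2) (Fin 2) K).det ^ k = c ^ 2 := by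
    rw [← det_pow, ← Units.val_pow_eq_pow_val, hc, det_fin_two_smul_one]
  refine ⟨g ^ k, pow_mem hg k, c, hc, ?_⟩
  rw [← hdet]
  exact pow_ne_one_of_lt_orderOf (orderOf_pos _).ne' (hH _)

/-- Let G ≤ GL_2(𝔽₁₃) with surjective determinant whose image in PGL_2(𝔽₁₃)
(i.e. the quotient of G by its scalar elements) is isomorphic to a subgroup of
S₄ or of A₅. Then G contains a scalar matrix different from ±Id. -/
theorem stmt14 (G : Subgroup (GL (Fin 2) (ZMod 13)))
    (hdet : ∀ u : (ZMod 13)ˣ, ∃ g ∈ G, ((g : Matrix (Fin 2) (Fin 2) (ZMod 13))).det = u)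
    (hproj :
      (∃ φ : G →* Equiv.Perm (Fin 4), ∀ x : G, φ x = 1 ↔
        ∃ c : ZMod 13, ((x : GL (Fin 2) (ZMod 13)) : Matrix (Fin 2) (Fin 2) (ZMod 13)) = c • 1) ∨
      (∃ φ : G →* alternatingGroup (Fin 5), ∀ x : G, φ x = 1 ↔
        ∃ c : ZMod 13, ((x : GL (Fin 2) (ZMod 13)) : Matrix (Fin 2) (Fin 2) (ZMod 13)) = c • 1)) :
    ∃ g ∈ G, ∃ c : ZMod 13,
      (g : Matrix (Fin 2) (Fin 2) (ZMod 13)) = c • (1 : Matrix (Fin 2) (Fin 2) (ZMod 13)) ∧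
      c ≠ 1 ∧ c ≠ -1 := by
  have hu : ∃ g ∈ G, (g : Matrix (Fin 2) (Fin 2) (ZMod 13)).det = 2 :=
    hdet ⟨2, 7, by decide, by decide⟩
  have h2 := ZMod.orderOf_two_thirteen
  have : Fact (Nat.Prime 13) := ⟨by norm_num⟩
  suffices ∃ g ∈ G, ∃ c : ZMod 13, (g : Matrix (Fin 2) (Fin 2) (ZMod 13)) = c • 1 ∧ c ^ 2 ≠ 1 by
    obtain ⟨g, hg, c, hc, hc2⟩ := this
    exact ⟨g, hg, c, hc, sq_ne_one_iff.mp hc2⟩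
  rcases hproj with ⟨φ, hφ⟩ | ⟨φ, hφ⟩
  · exact exists_mem_eq_smul_one_sq_ne_one G φ (hφ · |>.mp) hu fun σ ↦ by
      have := σ.orderOf_le_four; omega
  · exact exists_mem_eq_smul_one_sq_ne_one G φ (hφ · |>.mp) hu fun σ ↦ by
      have := alternatingGroup.orderOf_le_five σ; omega
end

section
/- Let p be an odd prime, H a p-subgroup of GL_2(ℤ/p^nℤ) stable under conjugation by C = [[1,0],[0,−1]], and M ∈ H. Define M_0 = M and M_{i+1} = M_i · C M_i C^{-1}. Then: (1) det(M_i) generates the same subgroup of (ℤ/p^nℤ)^× as det(M) for all i; (2) writing M_i = λ_i·Id + D_i + A_i with D_i diagonal traceless and A_i antidiagonal, there is a unit μ_i with D_i = μ_i D_0; (3) M_i is diagonal for all i ≥ n. -/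
/-!
Reduce modulo `p`. An element of a `p`-group becomes unipotent in `GL₂(𝔽_p)`, so for
`g = [[a, b], [c, d]] ∈ H` both `g` and `g · CgC⁻¹ = [[a² - bc, *], [*, d² - bc]]` have
trace `2`, and `g - 1` has determinant `0`; writing `a = 1 + x`, `d = 1 - x` this gives
`bc = -x²` and `4x² = 0`, so, `p` being odd, `a ≡ d ≡ 1 (mod p)`. Hence
`a + d` is a unit and `p ∣ a - d`. The iteration acts on entries by
`a - d ↦ (a + d)(a - d)` and `b ↦ b(d - a)`, `c ↦ c(a - d)`: the traceless diagonal part is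
rescaled by a unit at each step, while the off-diagonal entries of `M_i` are divisible by `p^i`,
hence vanish for `i ≥ n`. Finally `det M_{i+1} = (det M_i)²`, and squaring is a bijection on
a cyclic group of odd order.
-/

open Matrix

lemma isNilpotent_sub_one_of_pow_char_pow_eq_one {R : Type*} [Ring R] (p : ℕ) [Fact p.Prime]
    [CharP R p] {g : R} {m : ℕ} (hg : g ^ p ^ m = 1) : IsNilpotent (g - 1) :=
  ⟨p ^ m, by rw [sub_pow_char_pow_of_commute p m (Commute.one_right g), hg, one_pow, sub_self]⟩

lemma Matrix.det_eq_zero_of_isNilpotent {n K : Type*} [Fintype n] [DecidableEq n] [Nonempty n]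
    [CommRing K] [IsReduced K] {A : Matrix n n K} (hA : IsNilpotent A) : A.det = 0 := by
  obtain ⟨k, hk⟩ := hA
  exact IsNilpotent.eq_zero ⟨k, by rw [← det_pow, hk, det_zero]⟩

lemma ZMod.natCast_dvd_of_castHom_eq_zero {m n : ℕ} (h : m ∣ n) {x : ZMod n}
    (hx : ZMod.castHom h (ZMod m) x = 0) : (m : ZMod n) ∣ x := by
  obtain ⟨k, rfl⟩ := ZMod.intCast_surjective x
  rw [map_intCast, ZMod.intCast_zmod_eq_zero_iff_dvd] at hx
  obtain ⟨l, rfl⟩ := hx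
  exact ⟨l, by push_cast; ring⟩

lemma isUnit_of_isNilpotent_dvd_sub {R : Type*} [CommRing R] {r x y : R} (hr : IsNilpotent r)
    (hxy : r ∣ x - y) (hy : IsUnit y) : IsUnit x := by
  obtain ⟨c, hc⟩ := hxy
  rw [show x = y + r * c by rw [← hc]; ring]
  exact (Commute.isNilpotent_mul_right (Commute.all r c) hr).isUnit_add_left_of_commute hy
    (Commute.all _ _)

lemma Subgroup.zpowers_pow_eq_of_coprime {G : Type*} [Group G] {x : G} {k : ℕ}
    (hk : k.Coprime (orderOf x)) : zpowers (x ^ k) = zpowers x :=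
  le_antisymm (zpowers_le.mpr (npow_mem_zpowers x k))
    (zpowers_le.mpr (mem_zpowers_pow_iff.mpr hk))

namespace Matrix.GeneralLinearGroup

variable {n R : Type*} [Fintype n] [DecidableEq n] [CommRing R]

lemma det_mul_conj (g C : GL n R) : det (g * (C * g * C⁻¹)) = det g ^ 2 := by
  simp [map_mul, map_inv, pow_two, mul_inv_cancel_comm]

lemma zpowers_det_eq_of_mul_conj {C : GL n R} {g : ℕ → GL n R}
    (hg : ∀ i, g (i + 1) = g i * (C * g i * C⁻¹)) (hodd : Odd (orderOf (det (g 0))))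
    (i : ℕ) :
    Subgroup.zpowers (det (g i)) = Subgroup.zpowers (det (g 0)) := by
  have hdet : det (g i) = det (g 0) ^ 2 ^ i := by
    induction i with
    | zero => rw [pow_zero, pow_one]
    | succ i ih => rw [hg, det_mul_conj, ih, ← pow_mul, pow_succ]
  rw [hdet]
  exact Subgroup.zpowers_pow_eq_of_coprime ((Nat.coprime_two_left.mpr hodd).pow_left i)

end Matrix.GeneralLinearGroup

section FinTwo

variable {R : Type*} [CommRing R]

lemma isDiag_of_fin_two {A : Matrix (Fin 2) (Fin 2) R} (h01 : A 0 1 = 0) (h10 : A 1 0 = 0) :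
    A.IsDiag := by
  intro i j hij
  fin_cases i <;> fin_cases j <;> simp_all

lemma mul_conj_diag_one_neg_one (N : Matrix (Fin 2) (Fin 2) R) :
    N * (!![1, 0; 0, -1] * N * !![1, 0; 0, -1]) =
      !![N 0 0 * N 0 0 - N 0 1 * N 1 0, N 0 1 * (N 1 1 - N 0 0);
         N 1 0 * (N 0 0 - N 1 1), N 1 1 * N 1 1 - N 0 1 * N 1 0] := by
  rw [← mul_assoc, ← mul_assoc]
  ext i j
  fin_cases i <;> fin_cases j <;> simp [Matrix.mul_apply, Fin.sum_univ_two] <;> ring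

lemma coe_mul_conj_of_coe_eq {C : GL (Fin 2) R}
    (hC : (C : Matrix (Fin 2) (Fin 2) R) = !![1, 0; 0, -1]) (g : GL (Fin 2) R) :
    ((g * (C * g * C⁻¹) : GL (Fin 2) R) : Matrix (Fin 2) (Fin 2) R) =
      (g : Matrix (Fin 2) (Fin 2) R) *
        (!![1, 0; 0, -1] * (g : Matrix (Fin 2) (Fin 2) R) * !![1, 0; 0, -1]) := by
  have hCC : C * C = 1 := Units.ext <| by
    rw [Units.val_mul, hC, Units.val_one]
    ext i j
    fin_cases i <;> fin_cases j <;> simp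
  simp only [Units.val_mul, ← hC, inv_eq_of_mul_eq_one_left hCC]

section Iteration

variable {N : ℕ → Matrix (Fin 2) (Fin 2) R}

lemma exists_unit_mul_diag_sub
    (hN : ∀ i, N (i + 1) = N i * (!![1, 0; 0, -1] * N i * !![1, 0; 0, -1]))
    (hunit : ∀ i, IsUnit (N i 0 0 + N i 1 1)) (i : ℕ) :
    ∃ μ : Rˣ, N i 0 0 - N i 1 1 = μ * (N 0 0 0 - N 0 1 1) := by
  induction i with
  | zero => exact ⟨1, by simp⟩
  | succ i ih =>
    obtain ⟨μ, hμ⟩ := ih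
    obtain ⟨ν, hν⟩ := hunit i
    refine ⟨ν * μ, ?_⟩
    simp only [hN i, mul_conj_diag_one_neg_one, of_apply, cons_val', cons_val_zero, cons_val_one,
      empty_val', cons_val_fin_one, Units.val_mul]
    linear_combination (N i 0 0 + N i 1 1) * hμ - μ * (N 0 0 0 - N 0 1 1) * hν

lemma pow_dvd_offDiag
    (hN : ∀ i, N (i + 1) = N i * (!![1, 0; 0, -1] * N i * !![1, 0; 0, -1]))
    {r : R} (hr : ∀ i, r ∣ N i 0 0 - N i 1 1) (i : ℕ) :
    r ^ i ∣ N i 0 1 ∧ r ^ i ∣ N i 1 0 := by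
  induction i with
  | zero => simp
  | succ i ih =>
    simp only [hN i, mul_conj_diag_one_neg_one, of_apply, cons_val', cons_val_zero, cons_val_one,
      empty_val', cons_val_fin_one, pow_succ]
    exact ⟨mul_dvd_mul ih.1 (by simpa using (hr i).neg_right), mul_dvd_mul ih.2 (hr i)⟩

end Iteration

variable [Invertible (2 : R)]

def scalarPart (N : Matrix (Fin 2) (Fin 2) R) : R := ⅟2 * (N 0 0 + N 1 1)

def tracelessDiagPart (N : Matrix (Fin 2) (Fin 2) R) : Matrix (Fin 2) (Fin 2) R :=
  (⅟2 * (N 0 0 - N 1 1)) • !![1, 0; 0, -1]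

def antidiagPart (N : Matrix (Fin 2) (Fin 2) R) : Matrix (Fin 2) (Fin 2) R :=
  !![0, N 0 1; N 1 0, 0]

lemma eq_scalarPart_smul_one_add (N : Matrix (Fin 2) (Fin 2) R) :
    N = scalarPart N • 1 + tracelessDiagPart N + antidiagPart N := by
  have h : (2 : R) * ⅟2 = 1 := mul_invOf_self 2
  ext i j
  fin_cases i <;> fin_cases j <;>
    simp [scalarPart, tracelessDiagPart, antidiagPart, one_apply] <;>
    linear_combination (-N _ _) * h

lemma isDiag_tracelessDiagPart (N : Matrix (Fin 2) (Fin 2) R) : (tracelessDiagPart N).IsDiag :=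
  isDiag_of_fin_two (by simp [tracelessDiagPart]) (by simp [tracelessDiagPart])

lemma trace_tracelessDiagPart (N : Matrix (Fin 2) (Fin 2) R) :
    (tracelessDiagPart N).trace = 0 := by
  simp [tracelessDiagPart, trace_fin_two]

lemma tracelessDiagPart_eq_smul {N N' : Matrix (Fin 2) (Fin 2) R} {c : R}
    (h : N' 0 0 - N' 1 1 = c * (N 0 0 - N 1 1)) :
    tracelessDiagPart N' = c • tracelessDiagPart N := by
  rw [tracelessDiagPart, tracelessDiagPart, h, smul_smul, mul_left_comm]

end FinTwo

lemma diag_eq_one_of_isNilpotent_sub_one {K : Type*} [Field K] (h2 : (2 : K) ≠ 0)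
    {g : Matrix (Fin 2) (Fin 2) K} (hg : IsNilpotent (g - 1))
    (hgg : IsNilpotent (g * (!![1, 0; 0, -1] * g * !![1, 0; 0, -1]) - 1)) :
    g 0 0 = 1 ∧ g 1 1 = 1 := by
  have htr := (isNilpotent_trace_of_isNilpotent hg).eq_zero
  have hdet := det_eq_zero_of_isNilpotent hg
  rw [mul_conj_diag_one_neg_one] at hgg
  have htr' := (isNilpotent_trace_of_isNilpotent hgg).eq_zero
  simp only [trace_fin_two, det_fin_two, Matrix.sub_apply, one_apply_eq, ne_eq, zero_ne_one,
    one_ne_zero, not_false_eq_true, one_apply_ne, sub_zero, of_apply, cons_val', cons_val_zero,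
    cons_val_one, cons_val_fin_one] at htr hdet htr'
  have hsq : (2 * 2 : K) * (g 0 0 - 1) ^ 2 = 0 := by
    linear_combination htr' - 2 * hdet + (3 * g 0 0 - g 1 1 - 4) * htr
  have ha : g 0 0 - 1 = 0 := pow_eq_zero_iff two_ne_zero |>.mp
    ((mul_eq_zero.mp hsq).resolve_left (mul_ne_zero h2 h2))
  constructor
  · linear_combination ha
  · linear_combination htr - ha

lemma natCast_dvd_diag_sub_one {p n : ℕ} [Fact p.Prime] (hodd : p ≠ 2) (hn : n ≠ 0)
    {H : Subgroup (GL (Fin 2) (ZMod (p ^ n)))} (hH : IsPGroup p H)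
    {C : GL (Fin 2) (ZMod (p ^ n))}
    (hC : (C : Matrix (Fin 2) (Fin 2) (ZMod (p ^ n))) = !![1, 0; 0, -1])
    (hstab : ∀ h ∈ H, C * h * C⁻¹ ∈ H) {g : GL (Fin 2) (ZMod (p ^ n))} (hg : g ∈ H) :
    (p : ZMod (p ^ n)) ∣ (g : Matrix (Fin 2) (Fin 2) (ZMod (p ^ n))) 0 0 - 1 ∧
      (p : ZMod (p ^ n)) ∣ (g : Matrix (Fin 2) (Fin 2) (ZMod (p ^ n))) 1 1 - 1 := by
  set φ := ZMod.castHom (dvd_pow_self p hn) (ZMod p)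
  have hunip : ∀ h ∈ H,
      IsNilpotent (φ.mapMatrix (h : Matrix (Fin 2) (Fin 2) (ZMod (p ^ n))) - 1) := by
    intro h hh
    obtain ⟨m, hm⟩ := hH ⟨h, hh⟩
    refine isNilpotent_sub_one_of_pow_char_pow_eq_one p (m := m) ?_
    rw [← map_pow, ← Units.val_pow_eq_pow_val, show h ^ p ^ m = 1 from congrArg Subtype.val hm,
      Units.val_one, map_one]
  have h2 : (2 : ZMod p) ≠ 0 := Ring.two_ne_zero (by rwa [ZMod.ringChar_zmod_n])
  have hgg := hunip _ (H.mul_mem hg (hstab g hg))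
  have hJ : φ.mapMatrix !![1, 0; 0, -1] = !![1, 0; 0, -1] := by
    ext i j
    fin_cases i <;> fin_cases j <;> simp
  rw [coe_mul_conj_of_coe_eq hC, map_mul, map_mul, map_mul, hJ] at hgg
  obtain ⟨h00, h11⟩ := diag_eq_one_of_isNilpotent_sub_one h2 (hunip g hg) hgg
  constructor <;> apply ZMod.natCast_dvd_of_castHom_eq_zero <;> simp_all [φ]

lemma isUnit_add_and_natCast_dvd_sub {p n : ℕ} (hp : Odd p) {a d : ZMod (p ^ n)}
    (ha : (p : ZMod (p ^ n)) ∣ a - 1) (hd : (p : ZMod (p ^ n)) ∣ d - 1) :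
    IsUnit (a + d) ∧ (p : ZMod (p ^ n)) ∣ a - d := by
  have hp_nil : IsNilpotent (p : ZMod (p ^ n)) :=
    ⟨n, by rw [← Nat.cast_pow, ZMod.natCast_self]⟩
  have h2 : IsUnit (2 : ZMod (p ^ n)) :=
    ZMod.isUnit_prime_of_not_dvd Nat.prime_two hp.pow.not_two_dvd_nat
  constructor
  · exact isUnit_of_isNilpotent_dvd_sub hp_nil (by convert dvd_add ha hd using 1; ring) h2
  · convert dvd_sub ha hd using 1; ring

/-- Key lemma on p-subgroups of GL_2(ℤ/p^nℤ) stable under conjugation by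
C = [[1,0],[0,-1]]: for the iteration M₀ = M, M_{i+1} = M_i·C M_i C⁻¹ one has
(0) all M_i lie in H; (1) det M_i generates the same subgroup as det M;
(2) writing M_i = λ_i·Id + D_i + A_i with D_i diagonal traceless and A_i
antidiagonal, D_i is a unit multiple of D₀; (3) M_i is diagonal for i ≥ n. -/
theorem stmt15 (p : ℕ) (hp : p.Prime) (hodd : p ≠ 2) (n : ℕ) (hn : 0 < n)
    (H : Subgroup (GL (Fin 2) (ZMod (p ^ n)))) (hH : IsPGroup p H)
    (C : GL (Fin 2) (ZMod (p ^ n)))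
    (hC : (C : Matrix (Fin 2) (Fin 2) (ZMod (p ^ n))) = !![1, 0; 0, -1])
    (hstab : ∀ h ∈ H, C * h * C⁻¹ ∈ H)
    (M : GL (Fin 2) (ZMod (p ^ n))) (hM : M ∈ H)
    (f : ℕ → GL (Fin 2) (ZMod (p ^ n))) (hf0 : f 0 = M)
    (hfs : ∀ i, f (i + 1) = f i * (C * f i * C⁻¹)) :
    (∀ i, f i ∈ H) ∧
    (∀ i, Subgroup.zpowers (Matrix.GeneralLinearGroup.det (f i)) =
      Subgroup.zpowers (Matrix.GeneralLinearGroup.det M)) ∧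
    (∃ (lam : ℕ → ZMod (p ^ n)) (D A : ℕ → Matrix (Fin 2) (Fin 2) (ZMod (p ^ n))),
      (∀ i, ((f i : Matrix (Fin 2) (Fin 2) (ZMod (p ^ n)))
          = lam i • 1 + D i + A i) ∧ (D i).IsDiag ∧ (D i).trace = 0 ∧
          (A i) 0 0 = 0 ∧ (A i) 1 1 = 0) ∧
      (∀ i, ∃ μ : (ZMod (p ^ n))ˣ, D i = (μ : ZMod (p ^ n)) • D 0)) ∧
    (∀ i, n ≤ i → ((f i : Matrix (Fin 2) (Fin 2) (ZMod (p ^ n)))).IsDiag) := by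
  have := Fact.mk hp
  have hp_odd : Odd p := hp.odd_of_ne_two hodd
  set N : ℕ → Matrix (Fin 2) (Fin 2) (ZMod (p ^ n)) := fun i => f i
  have hmem (i : ℕ) : f i ∈ H := by
    induction i with
    | zero => exact hf0 ▸ hM
    | succ i ih => exact hfs i ▸ H.mul_mem ih (hstab _ ih)
  have hN (i : ℕ) : N (i + 1) = N i * (!![1, 0; 0, -1] * N i * !![1, 0; 0, -1]) := by
    simp only [N, hfs, coe_mul_conj_of_coe_eq hC]
  have hdiag (i : ℕ) := natCast_dvd_diag_sub_one hodd hn.ne' hH hC hstab (hmem i)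
  have hsum_sub (i : ℕ) := isUnit_add_and_natCast_dvd_sub hp_odd (hdiag i).1 (hdiag i).2
  let : Invertible (2 : ZMod (p ^ n)) :=
    (ZMod.isUnit_prime_of_not_dvd Nat.prime_two hp_odd.pow.not_two_dvd_nat).invertible
  refine ⟨hmem, fun i => ?_, ⟨fun i => scalarPart (N i), fun i => tracelessDiagPart (N i),
    fun i => antidiagPart (N i), fun i => ⟨eq_scalarPart_smul_one_add _,
      isDiag_tracelessDiagPart _, trace_tracelessDiagPart _, rfl, rfl⟩, fun i => ?_⟩,
    fun i hi => ?_⟩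
  · obtain ⟨k, hk⟩ := hH ⟨M, hM⟩
    have hord : orderOf (GeneralLinearGroup.det M) ∣ p ^ k := orderOf_dvd_of_pow_eq_one <| by
      rw [← map_pow, show M ^ p ^ k = 1 from congrArg Subtype.val hk, map_one]
    subst hf0
    exact GeneralLinearGroup.zpowers_det_eq_of_mul_conj hfs (hp_odd.pow.of_dvd_nat hord) i
  · obtain ⟨μ, hμ⟩ := exists_unit_mul_diag_sub hN (fun i => (hsum_sub i).1) i
    exact ⟨μ, tracelessDiagPart_eq_smul hμ⟩
  · have hpi : (p : ZMod (p ^ n)) ^ i = 0 :=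
      pow_eq_zero_of_le hi (by rw [← Nat.cast_pow, ZMod.natCast_self])
    obtain ⟨h01, h10⟩ := pow_dvd_offDiag hN (fun i => (hsum_sub i).2) i
    rw [hpi, zero_dvd_iff] at h01 h10
    exact isDiag_of_fin_two h01 h10
end

section
/- Let ℓ > 2 be a prime, and let G be a subgroup of GL_2(ℤ_ℓ) containing h = [[1,0],[0,−1]]. Let A be the closed ℤ_ℓ-subalgebra of Mat_2(ℤ_ℓ) generated by G. Suppose G contains a matrix M₁ whose (2,1)-entry has valuation ≤ m and a matrix M₂ whose (1,2)-entry has valuation ≤ m. Then A contains ℓ^m · Mat_2(ℤ_ℓ). -/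
/-!
Since `2` is a unit of `ℤ_[ℓ]`, the subalgebra `A` contains the idempotents `E₁₁ = (1 + h) / 2`
and `E₂₂ = (1 - h) / 2`. Cutting `M₁` and `M₂` down by them gives `E₂₂ M₁ E₁₁ = (M₁)₂₁ E₂₁` and
`E₁₁ M₂ E₂₂ = (M₂)₁₂ E₁₂` in `A`; as these entries divide `ℓ ^ m`, all of `ℓ ^ m E_ij` lie in `A`,
and they span `ℓ ^ m • Mat₂(ℤ_[ℓ])`.
-/

theorem PadicInt.isUnit_two {p : ℕ} [Fact p.Prime] (hp : p ≠ 2) : IsUnit (2 : ℤ_[p]) := by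
  rw [PadicInt.isUnit_iff, ← Nat.cast_ofNat, PadicInt.norm_natCast_eq_one_iff]
  exact (Nat.coprime_primes Fact.out Nat.prime_two).2 hp

theorem IsDiscreteValuationRing.dvd_pow_of_not_pow_succ_dvd {R : Type*} [CommRing R] [IsDomain R]
    [IsDiscreteValuationRing R] {ϖ a : R} (hϖ : Irreducible ϖ) {m : ℕ}
    (ha : ¬ ϖ ^ (m + 1) ∣ a) : a ∣ ϖ ^ m := by
  have ha0 : a ≠ 0 := by rintro rfl; exact ha (dvd_zero _)
  obtain ⟨n, u, rfl⟩ := eq_unit_mul_pow_irreducible ha0 hϖ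
  have hnm : n ≤ m := by
    contrapose! ha
    exact (pow_dvd_pow ϖ ha).mul_left _
  exact Units.mul_left_dvd.2 (pow_dvd_pow ϖ hnm)

namespace Matrix

variable {R : Type*} [CommRing R]

theorem single_diag_mem_of_diag_one_neg_one_mem (h2 : IsUnit (2 : R))
    {A : Subalgebra R (Matrix (Fin 2) (Fin 2) R)} (hA : !![1, 0; 0, -1] ∈ A) (i : Fin 2) :
    single i i 1 ∈ A := by
  obtain ⟨t, ht⟩ := h2.exists_left_inv
  have hplus : t • (1 + !![1, 0; 0, -1] : Matrix (Fin 2) (Fin 2) R) = single 0 0 1 := by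
    ext a b; fin_cases a <;> fin_cases b <;> simp; linear_combination ht
  have hminus : t • (1 - !![1, 0; 0, -1] : Matrix (Fin 2) (Fin 2) R) = single 1 1 1 := by
    ext a b; fin_cases a <;> fin_cases b <;> simp; linear_combination ht
  fin_cases i
  · rw [Fin.zero_eta, ← hplus]; exact A.smul_mem (A.add_mem A.one_mem hA) _
  · rw [Fin.mk_one, ← hminus]; exact A.smul_mem (A.sub_mem A.one_mem hA) _

variable {n : Type*} [Fintype n] [DecidableEq n] {A : Subalgebra R (Matrix n n R)}

theorem single_mem_of_entry_dvd {i j : n} (hi : single i i 1 ∈ A) (hj : single j j 1 ∈ A)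
    {M : Matrix n n R} (hM : M ∈ A) {c : R} (hc : M i j ∣ c) : single i j c ∈ A := by
  obtain ⟨d, rfl⟩ := hc
  have hcut : single i i 1 * M * single j j 1 = single i j (M i j) := by simp
  have hentry : single i j (M i j) ∈ A := hcut ▸ A.mul_mem (A.mul_mem hi hM) hj
  simpa [smul_single, mul_comm] using A.smul_mem hentry d

theorem smul_mem_of_forall_single_mem {c : R} (hc : ∀ i j, single i j c ∈ A)
    (B : Matrix n n R) : c • B ∈ A := by
  rw [matrix_eq_sum_single B, Finset.smul_sum]
  refine A.sum_mem fun i _ => ?_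
  rw [Finset.smul_sum]
  refine A.sum_mem fun j _ => ?_
  simpa [smul_single, mul_comm] using A.smul_mem (hc i j) (B i j)

end Matrix

/-- Let ℓ > 2 be prime and G ≤ GL_2(ℤ_ℓ) containing h = [[1,0],[0,-1]].
Let A be the closed ℤ_ℓ-subalgebra of Mat_2(ℤ_ℓ) generated by G (the topological
closure of the algebra generated by the matrices of G). If G contains a matrix
whose (2,1)-entry has valuation ≤ m and one whose (1,2)-entry has valuation ≤ m
(i.e. not divisible by ℓ^{m+1}), then A ⊇ ℓ^m · Mat_2(ℤ_ℓ). -/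
theorem stmt19 (ℓ : ℕ) [Fact (Nat.Prime ℓ)] (hℓ : 2 < ℓ) (m : ℕ)
    (G : Subgroup (GL (Fin 2) ℤ_[ℓ]))
    (h : GL (Fin 2) ℤ_[ℓ]) (hhG : h ∈ G)
    (hmat : (h : Matrix (Fin 2) (Fin 2) ℤ_[ℓ]) = !![1, 0; 0, -1])
    (M₁ : GL (Fin 2) ℤ_[ℓ]) (hM₁ : M₁ ∈ G)
    (hM₁v : ¬ (ℓ : ℤ_[ℓ]) ^ (m + 1) ∣ (M₁ : Matrix (Fin 2) (Fin 2) ℤ_[ℓ]) 1 0)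
    (M₂ : GL (Fin 2) ℤ_[ℓ]) (hM₂ : M₂ ∈ G)
    (hM₂v : ¬ (ℓ : ℤ_[ℓ]) ^ (m + 1) ∣ (M₂ : Matrix (Fin 2) (Fin 2) ℤ_[ℓ]) 0 1) :
    ∀ B : Matrix (Fin 2) (Fin 2) ℤ_[ℓ],
      (ℓ : ℤ_[ℓ]) ^ m • B ∈ closure
        ((Algebra.adjoin ℤ_[ℓ]
          ((fun g : GL (Fin 2) ℤ_[ℓ] => (g : Matrix (Fin 2) (Fin 2) ℤ_[ℓ])) '' G)
          : Subalgebra ℤ_[ℓ] (Matrix (Fin 2) (Fin 2) ℤ_[ℓ])) : Set (Matrix (Fin 2) (Fin 2) ℤ_[ℓ])) := by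
  intro B
  refine subset_closure (Matrix.smul_mem_of_forall_single_mem (fun i j => ?_) B)
  have memA {g : GL (Fin 2) ℤ_[ℓ]} (hg : g ∈ G) :
      (g : Matrix (Fin 2) (Fin 2) ℤ_[ℓ]) ∈
        Algebra.adjoin ℤ_[ℓ] ((fun g : GL (Fin 2) ℤ_[ℓ] => (g : Matrix (Fin 2) (Fin 2) ℤ_[ℓ])) '' G) :=
    Algebra.subset_adjoin (Set.mem_image_of_mem _ hg)
  have hdiag := Matrix.single_diag_mem_of_diag_one_neg_one_mem
    (PadicInt.isUnit_two hℓ.ne') (hmat ▸ memA hhG)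
  have hdvd {a : ℤ_[ℓ]} (ha : ¬ (ℓ : ℤ_[ℓ]) ^ (m + 1) ∣ a) : a ∣ (ℓ : ℤ_[ℓ]) ^ m :=
    IsDiscreteValuationRing.dvd_pow_of_not_pow_succ_dvd PadicInt.irreducible_p ha
  fin_cases i <;> fin_cases j
  · exact Matrix.single_mem_of_entry_dvd (hdiag 0) (hdiag 0) (Subalgebra.one_mem _) (by simp)
  · exact Matrix.single_mem_of_entry_dvd (hdiag 0) (hdiag 1) (memA hM₂) (hdvd hM₂v)
  · exact Matrix.single_mem_of_entry_dvd (hdiag 1) (hdiag 0) (memA hM₁) (hdvd hM₁v)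
  · exact Matrix.single_mem_of_entry_dvd (hdiag 1) (hdiag 1) (Subalgebra.one_mem _) (by simp)
end
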